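/- For every monoid M there exists a simple or 0-simple monoid N such that 𝔏(Val,CF,M) = 𝔏(Val,CF,N). -/

import Mathlib

/-- A context-free valence grammar over a monoid `M` with terminal alphabet `T`:
a context-free grammar (finitely many nonterminals, finitely many rules) each of whose
rules `(A, α, m)` rewrites the nonterminal `A` to the string `α ∈ (N ∪ T)*` and carries
the valence `m ∈ M`. -/
structure CFValenceGrammar (T : Type) (M : Type) [Monoid M] where
  NT : Type
  fintypeNT : Fintype NT
  start : NT
  rules : List (NT × List (NT ⊕ T) × M)

namespace CFValenceGrammar

variable {T M : Type} [Monoid M]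

/-- One derivation step on pairs (sentential form, accumulated valence). -/
def Produces (G : CFValenceGrammar T M)
    (x y : List (G.NT ⊕ T) × M) : Prop :=
  ∃ r ∈ G.rules, ∃ u v : List (G.NT ⊕ T),
    x.1 = u ++ Sum.inl r.1 :: v ∧ y.1 = u ++ r.2.1 ++ v ∧ y.2 = x.2 * r.2.2

/-- The derivation relation: the reflexive-transitive closure of `Produces`. -/
def Derives (G : CFValenceGrammar T M) :
    List (G.NT ⊕ T) × M → List (G.NT ⊕ T) × M → Prop :=
  Relation.ReflTransGen G.Produces

/-- The language generated by a context-free valence grammar: terminal words derivable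
from the start symbol by a valid derivation, i.e. one whose product of valences is the
identity. -/
def lang (G : CFValenceGrammar T M) : Language T :=
  { w | G.Derives ([Sum.inl G.start], 1) (w.map Sum.inr, 1) }

end CFValenceGrammar

/-- `𝔏(Val, CF, M)`: the family of languages over the terminal alphabet `T` generated by
context-free valence grammars over `M`. -/
def LValCF (T : Type) (M : Type) [Monoid M] : Set (Language T) :=
  { L | ∃ G : CFValenceGrammar T M, G.lang = L }

/-- An ideal of a monoid `M`: a nonempty subset `I` with `M I M ⊆ I`. -/
def IsMonoidIdeal {M : Type} [Monoid M] (I : Set M) : Prop :=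
  I.Nonempty ∧ ∀ a ∈ I, ∀ x y : M, x * a * y ∈ I

/-- A monoid is simple if it contains no proper ideal. -/
def IsSimpleMonoid (M : Type) [Monoid M] : Prop :=
  ∀ I : Set M, IsMonoidIdeal I → I = Set.univ

/-- `z` is a zero element of `M`. -/
def IsZeroElem {M : Type} [Monoid M] (z : M) : Prop :=
  ∀ m : M, z * m = z ∧ m * z = z

/-- A monoid with a zero element `z` is `0`-simple if its only ideals are `{z}` and `M`
itself, and not all products equal `z`. -/
def IsZeroSimpleMonoid (M : Type) [Monoid M] : Prop :=
  ∃ z : M, IsZeroElem z ∧ (∀ I : Set M, IsMonoidIdeal I → I = {z} ∨ I = Set.univ) ∧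
    ∃ a b : M, a * b ≠ z


/-! Call `m ∈ M` a factor of one if `a * m * b = 1` for some `a, b`. If every element is a factor
of one, any ideal contains `1` and `M` is simple. Otherwise the elements that are not factors of
one form an ideal `I ∌ 1`, and the Rees quotient `M / I` is `0`-simple: an ideal containing a class
other than `I` contains a factor of one, hence `1`. The quotient map `M → M / I` is surjective and
identifies nothing with `1`, and valence languages only depend on which products of valences are
`1`, so `M` and `M / I` generate the same languages. -/

namespace CFValenceGrammar

variable {T M N : Type} [Monoid M] [Monoid N]

def mapValence (g : M → N) (G : CFValenceGrammar T M) : CFValenceGrammar T N where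
  NT := G.NT
  fintypeNT := G.fintypeNT
  start := G.start
  rules := G.rules.map fun r => (r.1, r.2.1, g r.2.2)

theorem mapValence_mapValence {P : Type} [Monoid P] (g : M → N) (h : N → P)
    (G : CFValenceGrammar T M) : (G.mapValence g).mapValence h = G.mapValence (h ∘ g) := by
  simp only [mapValence, List.map_map]
  rfl

theorem mapValence_id (G : CFValenceGrammar T M) : G.mapValence id = G := by
  simp [mapValence]

theorem Derives.mapValence (f : M →* N) {G : CFValenceGrammar T M}
    {p q : List (G.NT ⊕ T) × M} (h : G.Derives p q) :
    (G.mapValence f).Derives (p.1, f p.2) (q.1, f q.2) := by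
  induction h with
  | refl => exact .refl
  | tail _ step ih =>
    obtain ⟨r, hr, u, v, hp, hq, hval⟩ := step
    exact ih.tail ⟨(r.1, r.2.1, f r.2.2), List.mem_map_of_mem hr, u, v, hp, hq, by simp [hval]⟩

theorem Derives.exists_of_mapValence (f : M →* N) {G : CFValenceGrammar T M}
    {p q : List (G.NT ⊕ T) × N} (h : (G.mapValence f).Derives p q) {m : M} (hm : f m = p.2) :
    ∃ m', f m' = q.2 ∧ G.Derives (p.1, m) (q.1, m') := by
  induction h with
  | refl => exact ⟨m, hm, .refl⟩
  | tail _ step ih =>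
    obtain ⟨m', hm', hd⟩ := ih
    obtain ⟨_, hr', u, v, hp, hq, hval⟩ := step
    obtain ⟨r, hr, rfl⟩ := List.mem_map.mp hr'
    exact ⟨m' * r.2.2, by simp [hm', hval], hd.tail ⟨r, hr, u, v, hp, hq, rfl⟩⟩

theorem lang_mapValence (f : M →* N) (hf : ∀ m, f m = 1 → m = 1) (G : CFValenceGrammar T M) :
    (G.mapValence f).lang = G.lang := by
  ext w
  constructor
  · intro h
    obtain ⟨m, hm, hd⟩ := Derives.exists_of_mapValence f h (map_one f)
    rwa [hf m hm] at hd
  · intro h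
    have hmap := Derives.mapValence f h
    simp only [map_one] at hmap
    exact hmap

end CFValenceGrammar

open CFValenceGrammar in
theorem LValCF_eq_of_surjective {M N : Type} [Monoid M] [Monoid N] (f : M →* N)
    (hs : Function.Surjective f) (hf : ∀ m, f m = 1 → m = 1) (T : Type) :
    LValCF T M = LValCF T N := by
  ext L
  constructor
  · rintro ⟨G, rfl⟩
    exact ⟨G.mapValence f, lang_mapValence f hf G⟩
  · rintro ⟨H, rfl⟩
    refine ⟨H.mapValence (Function.surjInv hs), ?_⟩
    rw [← lang_mapValence f hf, mapValence_mapValence,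
      (Function.rightInverse_surjInv hs).comp_eq_id, mapValence_id]

section Rees

variable {M : Type} [Monoid M]

theorem IsMonoidIdeal.eq_univ_of_mul_mul_eq_one {I : Set M} (hI : IsMonoidIdeal I) {m a b : M}
    (hm : m ∈ I) (h : a * m * b = 1) : I = Set.univ := by
  have h1 : (1 : M) ∈ I := h ▸ hI.2 m hm a b
  exact Set.eq_univ_of_forall fun x => by simpa using hI.2 1 h1 x 1

theorem isSimpleMonoid_of_forall_exists_mul_mul_eq_one (h : ∀ m : M, ∃ a b : M, a * m * b = 1) :
    IsSimpleMonoid M := by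
  rintro I hI
  obtain ⟨m, hm⟩ := hI.1
  obtain ⟨a, b, hab⟩ := h m
  exact hI.eq_univ_of_mul_mul_eq_one hm hab

def reesCon (I : Set M) (hI : ∀ a ∈ I, ∀ x y : M, x * a * y ∈ I) : Con M where
  r x y := x = y ∨ x ∈ I ∧ y ∈ I
  iseqv :=
    ⟨fun _ => .inl rfl,
      fun | .inl h => .inl h.symm | .inr ⟨hx, hy⟩ => .inr ⟨hy, hx⟩,
      fun
        | .inl rfl, h => h
        | h, .inl rfl => h
        | .inr ⟨hx, _⟩, .inr ⟨_, hz⟩ => .inr ⟨hx, hz⟩⟩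
  mul' := by
    have mul_left (x y : M) (hy : y ∈ I) : x * y ∈ I := by simpa using hI y hy x 1
    have mul_right (x y : M) (hx : x ∈ I) : x * y ∈ I := by simpa using hI x hx 1 y
    rintro w x y z (rfl | ⟨hw, hx⟩) (rfl | ⟨hy, hz⟩)
    · exact .inl rfl
    · exact .inr ⟨mul_left _ _ hy, mul_left _ _ hz⟩
    all_goals exact .inr ⟨mul_right _ _ hw, mul_right _ _ hx⟩

variable {I : Set M} {hI : ∀ a ∈ I, ∀ x y : M, x * a * y ∈ I}

theorem reesCon_mk_eq_iff {x y : M} :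
    (x : (reesCon I hI).Quotient) = y ↔ x = y ∨ x ∈ I ∧ y ∈ I :=
  Con.eq _

theorem reesCon_mk_eq_one_iff (h1 : 1 ∉ I) {x : M} :
    (x : (reesCon I hI).Quotient) = 1 ↔ x = 1 := by
  rw [← Con.coe_one, reesCon_mk_eq_iff]
  simp [h1]

theorem isZeroSimpleMonoid_reesCon_quotient {z : M} (hz : z ∈ I) (h1 : 1 ∉ I)
    (hfac : ∀ m ∉ I, ∃ a b : M, a * m * b = 1) : IsZeroSimpleMonoid (reesCon I hI).Quotient := by
  refine ⟨z, fun m => ?_, fun J hJ => ?_, 1, 1, ?_⟩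
  · induction m using Con.induction_on with | _ m => ?_
    exact ⟨reesCon_mk_eq_iff.2 (.inr ⟨by simpa using hI z hz 1 m, hz⟩),
      reesCon_mk_eq_iff.2 (.inr ⟨by simpa using hI z hz m 1, hz⟩)⟩
  · by_cases hJz : J ⊆ {(z : (reesCon I hI).Quotient)}
    · exact .inl (Set.Nonempty.subset_singleton_iff hJ.1 |>.1 hJz)
    · obtain ⟨x, hx, hxz⟩ := Set.not_subset.1 hJz
      induction x using Con.induction_on with | _ m => ?_
      have hm : m ∉ I := fun hm => hxz (reesCon_mk_eq_iff.2 (.inr ⟨hm, hz⟩))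
      obtain ⟨a, b, hab⟩ := hfac m hm
      exact .inr (hJ.eq_univ_of_mul_mul_eq_one hx (a := a) (b := b) (by
        rw [← Con.coe_mul, ← Con.coe_mul, hab, Con.coe_one]))
  · rw [one_mul, Ne, ← Con.coe_one, reesCon_mk_eq_iff]
    rintro (rfl | ⟨h1', _⟩)
    · exact h1 hz
    · exact h1 h1'

def nonFactorsOfOne (M : Type) [Monoid M] : Set M :=
  {m | ∀ a b : M, a * m * b ≠ 1}

theorem mul_mul_mem_nonFactorsOfOne (m : M) (hm : m ∈ nonFactorsOfOne M) (x y : M) :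
    x * m * y ∈ nonFactorsOfOne M :=
  fun a b h => hm (a * x) (y * b) (by simpa only [mul_assoc] using h)

theorem one_notMem_nonFactorsOfOne : (1 : M) ∉ nonFactorsOfOne M :=
  fun h => h 1 1 (by simp)

end Rees

/-- For every monoid `M` there exists a simple or `0`-simple monoid `N`
such that `𝔏(Val, CF, M) = 𝔏(Val, CF, N)` (over every terminal alphabet). -/
theorem exists_simple_monoid_LValCF_eq (M : Type) [Monoid M] :
    ∃ (N : Type) (_i : Monoid N),
      (IsSimpleMonoid N ∨ IsZeroSimpleMonoid N) ∧
        ∀ T : Type, LValCF T M = LValCF T N := by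
  by_cases hsimple : ∀ m : M, ∃ a b : M, a * m * b = 1
  · exact ⟨M, ‹_›, .inl (isSimpleMonoid_of_forall_exists_mul_mul_eq_one hsimple), fun _ => rfl⟩
  obtain ⟨z, hz⟩ : ∃ z, z ∈ nonFactorsOfOne M := by simpa [nonFactorsOfOne] using hsimple
  let c := reesCon (nonFactorsOfOne M) mul_mul_mem_nonFactorsOfOne
  refine ⟨c.Quotient, inferInstance, .inr ?_, LValCF_eq_of_surjective c.mk' c.mk'_surjective ?_⟩
  · refine isZeroSimpleMonoid_reesCon_quotient hz one_notMem_nonFactorsOfOne fun m hm => ?_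
    simpa [nonFactorsOfOne] using hm
  · exact fun m => (reesCon_mk_eq_one_iff one_notMem_nonFactorsOfOne).1
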